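/- arXiv:1407.6241 — 5 statements merged into one kernel-verified Lean document; each statement's English description precedes it below -/
import Mathlib

section
/- For all integers d₁, d₂, d₃, the trace of the product μ(1,0,d₁)·μ(0,1,d₂)·μ(−1,−1,d₃) equals 2 − d₁d₂ − d₁d₃ − d₂d₃ + d₁d₂d₃. (This product is the inverse monodromy of the tropicalization of the log Calabi-Yau surface obtained from ℙ² with its triangle of lines by d_i non-toric blowups on the i-th line; its trace governs the classification of rank 2 cluster varieties.) -/
/-- The local monodromy contribution of `k` non-toric blowups on the boundary divisor
in the direction `(a, b)` (Equation (3.2) of the paper). -/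
def mu (a b k : ℤ) : Matrix (Fin 2) (Fin 2) ℤ :=
  !![1 - k * a * b, k * a ^ 2; -k * b ^ 2, 1 + k * a * b]

/-- The trace of the inverse monodromy of the tropicalization of the log Calabi-Yau
surface obtained from `ℙ²` by `dᵢ` non-toric blowups on the `i`-th line of the triangle:
`tr(μ(1,0,d₁)·μ(0,1,d₂)·μ(−1,−1,d₃)) = 2 − d₁d₂ − d₁d₃ − d₂d₃ + d₁d₂d₃`. -/
theorem trace_monodromy (d₁ d₂ d₃ : ℤ) :
    (mu 1 0 d₁ * mu 0 1 d₂ * mu (-1) (-1) d₃).trace =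
      2 - d₁ * d₂ - d₁ * d₃ - d₂ * d₃ + d₁ * d₂ * d₃ := by
  simp [mu, Matrix.trace_fin_two, Matrix.mul_fin_two]
  ring
end

section
/- For every integer n ≥ 0, μ(1,0,2)·μ(0,1,2)·μ(−1,−1,2+n) = −μ(1,1,n) = [[n−1, −n], [n, −n−1]]; this matrix M has trace −2 and satisfies (M + I)² = 0, so it is minus a unipotent matrix, i.e. conjugate to a Kodaira monodromy matrix of type I_n*. (Blowup data (d₁,d₂,d₃) = (2,2,2+n) on the triangle of lines in ℙ², Table 1 of the paper.) -/
/-- For every `n ≥ 0`, `μ(1,0,2)·μ(0,1,2)·μ(−1,−1,2+n) = −μ(1,1,n) = [[n−1,−n],[n,−n−1]]`;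
this matrix `M` has trace `−2` and `(M + I)² = 0`, i.e. it is minus a unipotent matrix,
conjugate to a Kodaira monodromy matrix of type `Iₙ*`. -/
theorem I_n_star_monodromy (n : ℤ) (hn : 0 ≤ n) :
    mu 1 0 2 * mu 0 1 2 * mu (-1) (-1) (2 + n) = -(mu 1 1 n) ∧
    mu 1 0 2 * mu 0 1 2 * mu (-1) (-1) (2 + n) = !![n - 1, -n; n, -n - 1] ∧
    (mu 1 0 2 * mu 0 1 2 * mu (-1) (-1) (2 + n)).trace = -2 ∧
    (mu 1 0 2 * mu 0 1 2 * mu (-1) (-1) (2 + n) + 1) ^ 2 = 0 := by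
  have h : mu 1 0 2 * mu 0 1 2 * mu (-1) (-1) (2 + n) = !![n - 1, -n; n, -n - 1] := by
    simp only [mu]
    ext i j
    fin_cases i <;> fin_cases j <;>
      simp [Matrix.mul_apply, Fin.sum_univ_succ] <;> ring
  refine ⟨?_, h, ?_, ?_⟩
  · rw [h]; simp only [mu]; ext i j; fin_cases i <;> fin_cases j <;> simp <;> ring
  · rw [h, Matrix.trace_fin_two]; simp; ring
  · rw [h]
    ext i j
    fin_cases i <;> fin_cases j <;>
      simp [pow_two, Matrix.mul_apply, Fin.sum_univ_succ, Matrix.one_apply] <;> ring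
end

section
/- The matrix M := μ(1,0,2)·μ(0,1,3)·μ(−1,−1,3) equals [[4, −7], [3, −5]] and satisfies M³ = I with M ≠ I; hence M has order 3 in SL₂(ℤ), i.e. it is conjugate to a Kodaira monodromy matrix of type IV*. (Blowup data (d₁,d₂,d₃) = (2,3,3) on the triangle of lines in ℙ², Table 1 of the paper.) -/
/-- `M := μ(1,0,2)·μ(0,1,3)·μ(−1,−1,3)` equals `[[4,−7],[3,−5]]` and satisfies `M³ = I`
with `M ≠ I`: it has order 3 in `SL₂(ℤ)`, i.e. it is conjugate to a Kodaira monodromy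
matrix of type `IV*`. -/
theorem IV_star_monodromy :
    mu 1 0 2 * mu 0 1 3 * mu (-1) (-1) 3 = !![4, -7; 3, -5] ∧
    (mu 1 0 2 * mu 0 1 3 * mu (-1) (-1) 3) ^ 3 = 1 ∧
    mu 1 0 2 * mu 0 1 3 * mu (-1) (-1) 3 ≠ 1 := by
  have h : mu 1 0 2 * mu 0 1 3 * mu (-1) (-1) 3 = !![4, -7; 3, -5] := by
    simp [mu, Matrix.mul_fin_two]
  refine ⟨h, ?_, ?_⟩
  · rw [h]; norm_num [pow_succ, Matrix.mul_fin_two, Matrix.one_fin_two]; exact (Matrix.one_fin_two).symm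
  · rw [h, Matrix.one_fin_two]
    intro hc
    have := congrFun (congrFun hc 0) 0
    simp at this
end

section
/- The matrix M := μ(1,0,2)·μ(0,1,3)·μ(−1,−1,4) equals [[7, −10], [5, −7]] and satisfies M² = −I; hence M has order 4 in SL₂(ℤ), i.e. it is conjugate to a Kodaira monodromy matrix of type III*. (Blowup data (d₁,d₂,d₃) = (2,3,4) on the triangle of lines in ℙ², Table 1 of the paper.) -/
/-- `M := μ(1,0,2)·μ(0,1,3)·μ(−1,−1,4)` equals `[[7,−10],[5,−7]]` and satisfies
`M² = −I`: it has order 4 in `SL₂(ℤ)`, i.e. it is conjugate to a Kodaira monodromy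
matrix of type `III*`. -/
theorem III_star_monodromy :
    mu 1 0 2 * mu 0 1 3 * mu (-1) (-1) 4 = !![7, -10; 5, -7] ∧
    (mu 1 0 2 * mu 0 1 3 * mu (-1) (-1) 4) ^ 2 = -1 := by
  have h : mu 1 0 2 * mu 0 1 3 * mu (-1) (-1) 4 = !![7, -10; 5, -7] := by
    simp [mu, Matrix.mul_fin_two]
  refine ⟨h, ?_⟩
  rw [h, sq]
  ext i j
  fin_cases i <;> fin_cases j <;>
    simp [Matrix.mul_apply, Fin.sum_univ_succ]
end

section
/- The matrix M := μ(1,0,2)·μ(0,1,3)·μ(−1,−1,5) equals [[10, −13], [7, −9]] and satisfies M³ = −I with M ≠ −I; hence M has order 6 in SL₂(ℤ), i.e. it is conjugate to a Kodaira monodromy matrix of type II*. (Blowup data (d₁,d₂,d₃) = (2,3,5) on the triangle of lines in ℙ², Table 1 of the paper.) -/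
/-- `M := μ(1,0,2)·μ(0,1,3)·μ(−1,−1,5)` equals `[[10,−13],[7,−9]]` and satisfies
`M³ = −I` with `M ≠ −I`: it has order 6 in `SL₂(ℤ)`, i.e. it is conjugate to a Kodaira
monodromy matrix of type `II*`. -/
theorem II_star_monodromy :
    mu 1 0 2 * mu 0 1 3 * mu (-1) (-1) 5 = !![10, -13; 7, -9] ∧
    (mu 1 0 2 * mu 0 1 3 * mu (-1) (-1) 5) ^ 3 = -1 ∧
    mu 1 0 2 * mu 0 1 3 * mu (-1) (-1) 5 ≠ -1 := by
  have h : mu 1 0 2 * mu 0 1 3 * mu (-1) (-1) 5 = !![10, -13; 7, -9] := by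
    simp [mu, Matrix.mul_fin_two]
  refine ⟨h, ?_, ?_⟩
  · rw [h, pow_succ, pow_two, Matrix.mul_fin_two, Matrix.mul_fin_two]
    norm_num
    ext i j
    fin_cases i <;> fin_cases j <;> simp
  · rw [h]
    intro hc
    have := congrArg (fun M => M 0 0) hc
    simp at this
end
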